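/- Let X be a nonempty closed subset of the real line ℝ with d = d_H(X, ℝ) < ∞. For t ∈ [0, d] let C_t = B_t(X) be the closed t-neighborhood of X in ℝ. Then for all 0 ≤ t ≤ s ≤ d one has d_GH(C_t, C_s) = s − t (the sets C_t carrying the induced metrics); that is, the canonical Hausdorff geodesic connecting X and ℝ is a shortest curve with respect to the Gromov–Hausdorff distance. -/

import Mathlib

open scoped ENNReal

noncomputable section

/-- Ultrametric pseudodistance: infimum over chains from `x` to `y` of the
maximal edge length of the chain. -/
noncomputable def ultraDist {X : Type*} [MetricSpace X] (x y : X) : ℝ≥0∞ :=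
  ⨅ (n : ℕ) (f : Fin (n + 1) → X) (_ : f 0 = x) (_ : f (Fin.last n) = y),
    ⨆ i : Fin n, edist (f i.castSucc) (f i.succ)

/-- Ultrametric pseudodiameter. -/
noncomputable def ultraDiam (X : Type*) [MetricSpace X] : ℝ≥0∞ :=
  ⨆ (x : X) (y : X), ultraDist x y

/-- A correspondence between `X` and `Y`: a relation whose projections are surjective. -/
def IsCorrespondence {X Y : Type*} (R : Set (X × Y)) : Prop :=
  (∀ x : X, ∃ y : Y, (x, y) ∈ R) ∧ (∀ y : Y, ∃ x : X, (x, y) ∈ R)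

/-- Distortion of a relation. -/
noncomputable def distortion {X Y : Type*} [MetricSpace X] [MetricSpace Y]
    (R : Set (X × Y)) : ℝ≥0∞ :=
  ⨆ (p ∈ R) (q ∈ R), ENNReal.ofReal |dist p.1 q.1 - dist p.2 q.2|

/-- Gromov–Hausdorff distance: half the infimal distortion of correspondences. -/
noncomputable def ghDist (X Y : Type*) [MetricSpace X] [MetricSpace Y] : ℝ≥0∞ :=
  (⨅ (R : Set (X × Y)) (_ : IsCorrespondence R), distortion R) / 2

/-!
The ultrametric diameter of a metric space (the supremum, over pairs of points, of the least
achievable largest step of a chain joining them) changes by at most the distortion of a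
correspondence, so `ultraDiam C_t ≤ ultraDiam C_s + 2 d_GH(C_t, C_s)`. For a closed `A ⊆ ℝ` at
Hausdorff distance `h` from `ℝ`, `ultraDiam A = 2h`: a chain in `A` running past a point at
distance `h` from `A` has a step of length at least `2h`, and comparing `A` with `ℝ` (whose
ultrametric diameter is `0`) through the correspondence `|x - y| ≤ h` gives the reverse bound.
As `d_H(C_t, ℝ) = d - t`, this yields `d_GH(C_t, C_s) ≥ s - t`, and the correspondence
`|x - y| ≤ s - t` between `C_t` and `C_s` gives equality.
-/

open Metric Set

lemma Fin.exists_not_castSucc_and_succ {n : ℕ} {P : Fin (n + 1) → Prop} (h0 : ¬ P 0)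
    (hl : P (Fin.last n)) : ∃ i : Fin n, ¬ P i.castSucc ∧ P i.succ := by
  induction n with
  | zero => exact absurd hl h0
  | succ n ih =>
    by_cases h : P (Fin.last n).castSucc
    · obtain ⟨i, hi⟩ := ih (P := fun j => P j.castSucc) h0 h
      exact ⟨i.castSucc, by simpa only [Fin.succ_castSucc] using hi⟩
    · exact ⟨Fin.last n, h, by rwa [Fin.succ_last]⟩

section Correspondence

variable {X Y : Type*} [MetricSpace X] [MetricSpace Y]

lemma ultraDist_le_iSup_edist {x y : X} {n : ℕ} (f : Fin (n + 1) → X) (h0 : f 0 = x)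
    (hl : f (Fin.last n) = y) : ultraDist x y ≤ ⨆ i : Fin n, edist (f i.castSucc) (f i.succ) :=
  iInf_le_of_le n <| iInf_le_of_le f <| iInf_le_of_le h0 <| iInf_le_of_le hl le_rfl

lemma ultraDist_le_edist (x y : X) : ultraDist x y ≤ edist x y :=
  (ultraDist_le_iSup_edist ![x, y] rfl rfl).trans <| by simp

lemma ultraDist_le_ultraDiam (x y : X) : ultraDist x y ≤ ultraDiam X :=
  le_iSup₂_of_le x y le_rfl

lemma edist_le_edist_add_distortion {R : Set (X × Y)} {p q : X × Y} (hp : p ∈ R)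
    (hq : q ∈ R) :
    edist p.1 q.1 ≤ edist p.2 q.2 + distortion R := by
  have hdis : ENNReal.ofReal |dist p.1 q.1 - dist p.2 q.2| ≤ distortion R :=
    le_iSup₂_of_le p hp (le_iSup₂_of_le q hq le_rfl)
  rw [edist_dist, edist_dist]
  calc ENNReal.ofReal (dist p.1 q.1)
      ≤ ENNReal.ofReal (dist p.2 q.2 + |dist p.1 q.1 - dist p.2 q.2|) :=
        ENNReal.ofReal_le_ofReal (by linarith [le_abs_self (dist p.1 q.1 - dist p.2 q.2)])
    _ ≤ ENNReal.ofReal (dist p.2 q.2) + distortion R :=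
        ENNReal.ofReal_add_le.trans (by gcongr)

lemma iSup_edist_le_add_distortion {R : Set (X × Y)} {n : ℕ} {f : Fin (n + 1) → X}
    {g : Fin (n + 1) → Y} (hfg : ∀ i, (f i, g i) ∈ R) :
    ⨆ i : Fin n, edist (f i.castSucc) (f i.succ) ≤
      (⨆ i : Fin n, edist (g i.castSucc) (g i.succ)) + distortion R :=
  iSup_le fun i => (edist_le_edist_add_distortion (hfg _) (hfg _)).trans <| by
    gcongr; exact le_iSup (fun j : Fin n => edist (g j.castSucc) (g j.succ)) i

lemma ultraDist_le_ultraDist_add_distortion {R : Set (X × Y)} (hR : IsCorrespondence R)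
    {x x' : X} {y y' : Y} (hx : (x, y) ∈ R) (hx' : (x', y') ∈ R) :
    ultraDist x x' ≤ ultraDist y y' + distortion R := by
  simp only [ultraDist, ENNReal.iInf_add]
  refine le_iInf fun n => le_iInf fun g => le_iInf fun hg0 => le_iInf fun hgl => ?_
  rcases n with _ | m
  · have hyy : y = y' := hg0.symm.trans hgl
    subst hyy
    calc ultraDist x x' ≤ edist x x' := ultraDist_le_edist x x'
      _ ≤ edist y y + distortion R := edist_le_edist_add_distortion hx hx'
      _ ≤ _ := by rw [edist_self, zero_add]; exact le_add_self
  · have hlast : (Fin.last (m + 1)) ≠ 0 := Fin.last_pos.ne'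
    have hlift : ∀ i : Fin (m + 2), ∃ a : X, (a, g i) ∈ R ∧
        (i = 0 → a = x) ∧ (i = Fin.last (m + 1) → a = x') := by
      intro i
      by_cases h0 : i = 0
      · subst h0
        exact ⟨x, hg0 ▸ hx, fun _ => rfl, fun h => absurd h.symm hlast⟩
      by_cases hl : i = Fin.last (m + 1)
      · subst hl
        exact ⟨x', hgl ▸ hx', fun h => absurd h hlast, fun _ => rfl⟩
      obtain ⟨a, ha⟩ := hR.2 (g i)
      exact ⟨a, ha, fun h => absurd h h0, fun h => absurd h hl⟩
    choose f hfR hf0 hfl using hlift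
    exact (ultraDist_le_iSup_edist f (hf0 0 rfl) (hfl _ rfl)).trans
      (iSup_edist_le_add_distortion hfR)

lemma ultraDiam_le_add_distortion {R : Set (X × Y)} (hR : IsCorrespondence R) :
    ultraDiam X ≤ ultraDiam Y + distortion R :=
  iSup₂_le fun x x' => by
    obtain ⟨y, hy⟩ := hR.1 x
    obtain ⟨y', hy'⟩ := hR.1 x'
    exact (ultraDist_le_ultraDist_add_distortion hR hy hy').trans
      (by gcongr; exact ultraDist_le_ultraDiam y y')

lemma ultraDiam_le_add_two_mul_ghDist : ultraDiam X ≤ ultraDiam Y + 2 * ghDist X Y := by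
  rw [ghDist, ENNReal.mul_div_cancel two_ne_zero ENNReal.ofNat_ne_top]
  simp only [ENNReal.add_iInf]
  exact le_iInf₂ fun R hR => ultraDiam_le_add_distortion hR

end Correspondence

section Subsets

variable {E : Type*} [MetricSpace E]

lemma distortion_setOf_dist_le (A B : Set E) (r : ℝ) :
    distortion {p : A × B | dist (p.1 : E) p.2 ≤ r} ≤ ENNReal.ofReal (2 * r) :=
  iSup₂_le fun p hp => iSup₂_le fun q hq => ENNReal.ofReal_le_ofReal <| by
    have h := dist_dist_dist_le (p.1 : E) q.1 p.2 q.2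
    rw [Real.dist_eq] at h
    simp only [mem_ofPred_eq] at hp hq
    rw [Subtype.dist_eq, Subtype.dist_eq]
    linarith

lemma isCorrespondence_setOf_dist_le [ProperSpace E] {A B : Set E} (hA : IsClosed A)
    (hB : IsClosed B) {r : ℝ} (hr : 0 ≤ r) (hAB : A ⊆ cthickening r B)
    (hBA : B ⊆ cthickening r A) : IsCorrespondence {p : A × B | dist (p.1 : E) p.2 ≤ r} := by
  constructor
  · intro x
    have hx := hAB x.2
    rw [hB.cthickening_eq_biUnion_closedBall hr, mem_iUnion₂] at hx
    obtain ⟨y, hy, hxy⟩ := hx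
    exact ⟨⟨y, hy⟩, hxy⟩
  · intro y
    have hy := hBA y.2
    rw [hA.cthickening_eq_biUnion_closedBall hr, mem_iUnion₂] at hy
    obtain ⟨x, hx, hyx⟩ := hy
    exact ⟨⟨x, hx⟩, by rw [mem_ofPred_eq, dist_comm]; exact hyx⟩

lemma ghDist_le_of_subset_cthickening [ProperSpace E] {A B : Set E} (hA : IsClosed A)
    (hB : IsClosed B) {r : ℝ} (hr : 0 ≤ r) (hAB : A ⊆ cthickening r B)
    (hBA : B ⊆ cthickening r A) : ghDist A B ≤ ENNReal.ofReal r := by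
  refine ENNReal.div_le_of_le_mul ?_
  calc _ ≤ distortion {p : A × B | dist (p.1 : E) p.2 ≤ r} :=
        iInf₂_le _ (isCorrespondence_setOf_dist_le hA hB hr hAB hBA)
    _ ≤ ENNReal.ofReal (2 * r) := distortion_setOf_dist_le A B r
    _ = ENNReal.ofReal r * 2 := by rw [ENNReal.ofReal_mul zero_le_two, mul_comm]; simp

lemma hausdorffEDist_cthickening_le (A : Set E) (δ : ℝ) :
    hausdorffEDist A (cthickening δ A) ≤ ENNReal.ofReal δ :=
  hausdorffEDist_le_of_infEDist
    (fun _ hx => by rw [infEDist_zero_of_mem (self_subset_cthickening A hx)]; exact zero_le)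
    (fun _ hy => mem_cthickening_iff.1 hy)

end Subsets

lemma Convex.ultraDiam_eq_zero {E : Type*} [NormedAddCommGroup E] [NormedSpace ℝ E]
    {S : Set E} (hS : Convex ℝ S) : ultraDiam S = 0 := by
  refine le_antisymm (iSup₂_le fun x y => ?_) zero_le
  have hstep : ∀ n : ℕ,
      ultraDist x y ≤ ENNReal.ofReal (dist x y * (1 / ((n : ℝ) + 1))) := by
    intro n
    have hmem : ∀ i : Fin (n + 2), (i : ℝ) / (n + 1) ∈ Icc (0 : ℝ) 1 := fun i =>
      ⟨by positivity, div_le_one_of_le₀ (by exact_mod_cast i.is_le) (by positivity)⟩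
    let f : Fin (n + 2) → S := fun i =>
      ⟨AffineMap.lineMap (x : E) y ((i : ℝ) / (n + 1)), hS.lineMap_mem x.2 y.2 (hmem i)⟩
    refine (ultraDist_le_iSup_edist f ?_ ?_).trans (iSup_le fun i => ?_)
    · ext; simp [f]
    · ext; simp [f, Nat.cast_add_one_ne_zero]
    rw [edist_dist, Subtype.dist_eq, dist_lineMap_lineMap, Subtype.dist_eq]
    refine ENNReal.ofReal_le_ofReal (le_of_eq ?_)
    rw [mul_comm, Real.dist_eq]
    congr 1
    simp only [Fin.val_castSucc, Fin.val_succ, Nat.cast_add, Nat.cast_one]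
    rw [← sub_div, abs_div, abs_of_pos (by positivity : (0 : ℝ) < n + 1)]
    simp
  have hlim : Filter.Tendsto (fun n : ℕ => ENNReal.ofReal (dist x y * (1 / ((n : ℝ) + 1))))
      Filter.atTop (nhds 0) := by
    simpa using ENNReal.tendsto_ofReal
      ((tendsto_one_div_add_atTop_nhds_zero_nat (𝕜 := ℝ)).const_mul (dist x y))
  exact ge_of_tendsto' hlim hstep

section NormedSpace

variable {E : Type*} [NormedAddCommGroup E] [NormedSpace ℝ E]

lemma hausdorffEDist_cthickening_univ {X : Set E} {d t : ℝ}
    (hd : hausdorffEDist X univ = ENNReal.ofReal d) (ht : 0 ≤ t) :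
    hausdorffEDist (cthickening t X) univ = ENNReal.ofReal (d - t) := by
  rw [ENNReal.ofReal_sub _ ht, ← hd]
  refine le_antisymm (hausdorffEDist_le_of_infEDist ?_ fun y _ => ?_) ?_
  · exact fun x _ => by rw [infEDist_zero_of_mem (mem_univ x)]; exact zero_le
  · rw [infEDist_cthickening]
    gcongr
    rw [hausdorffEDist_comm]
    exact infEDist_le_hausdorffEDist_of_mem (mem_univ y)
  · rw [tsub_le_iff_left]
    calc hausdorffEDist X univ
        ≤ hausdorffEDist X (cthickening t X) + hausdorffEDist (cthickening t X) univ :=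
          hausdorffEDist_triangle
      _ ≤ _ := by gcongr; exact hausdorffEDist_cthickening_le X t

lemma ultraDiam_le_two_mul_hausdorffEDist_univ [ProperSpace E] {A : Set E} (hA : IsClosed A)
    (h : hausdorffEDist A univ ≠ ⊤) : ultraDiam A ≤ 2 * hausdorffEDist A univ := by
  set r := (hausdorffEDist A univ).toReal
  have hcover : univ ⊆ cthickening r A := fun y _ => by
    rw [mem_cthickening_iff, ENNReal.ofReal_toReal h, hausdorffEDist_comm]
    exact infEDist_le_hausdorffEDist_of_mem (mem_univ y)
  calc ultraDiam A ≤ ultraDiam (univ : Set E) + 2 * ghDist A (univ : Set E) :=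
        ultraDiam_le_add_two_mul_ghDist
    _ ≤ 0 + 2 * ENNReal.ofReal r := by
        rw [convex_univ.ultraDiam_eq_zero]
        gcongr
        exact ghDist_le_of_subset_cthickening hA isClosed_univ ENNReal.toReal_nonneg
          ((subset_univ A).trans (self_subset_cthickening _)) hcover
    _ = 2 * hausdorffEDist A univ := by rw [zero_add, ENNReal.ofReal_toReal h]

end NormedSpace

lemma two_mul_infEDist_le_ultraDiam {A : Set ℝ} {a b p : ℝ} (ha : a ∈ A) (hb : b ∈ A)
    (hap : a < p) (hpb : p < b) : 2 * infEDist p A ≤ ultraDiam A := by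
  refine le_trans ?_ (ultraDist_le_ultraDiam (⟨a, ha⟩ : A) ⟨b, hb⟩)
  refine le_iInf fun n => le_iInf fun f => le_iInf fun hf0 => le_iInf fun hfl => ?_
  obtain ⟨i, hu, hv⟩ := Fin.exists_not_castSucc_and_succ (P := fun j => p ≤ (f j : ℝ))
    (by simp [hf0, hap]) (by simp [hfl, hpb.le])
  simp only [not_le] at hu hv
  refine le_iSup_of_le i ?_
  calc 2 * infEDist p A = infEDist p A + infEDist p A := two_mul _
    _ ≤ edist p (f i.castSucc) + edist p (f i.succ) :=
        add_le_add (infEDist_le_edist_of_mem (f _).2) (infEDist_le_edist_of_mem (f _).2)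
    _ = edist (f i.castSucc) (f i.succ) := by
        rw [edist_dist, edist_dist, edist_dist, Subtype.dist_eq,
          ← ENNReal.ofReal_add dist_nonneg dist_nonneg, Real.dist_eq, Real.dist_eq,
          Real.dist_eq, abs_of_pos (sub_pos.2 hu), abs_of_nonpos (sub_nonpos.2 hv),
          abs_of_nonpos (by linarith)]
        ring_nf

lemma exists_mem_lt_and_mem_gt_of_hausdorffEDist_univ_ne_top {A : Set ℝ}
    (h : hausdorffEDist A univ ≠ ⊤) (p : ℝ) : ∃ a ∈ A, ∃ b ∈ A, a < p ∧ p < b := by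
  set M := (hausdorffEDist A univ).toReal + 1
  have hnear : ∀ y : ℝ, ∃ a ∈ A, |y - a| < M := by
    intro y
    have hlt : infEDist y A < ENNReal.ofReal M := by
      calc infEDist y A ≤ hausdorffEDist A univ := by
            rw [hausdorffEDist_comm]; exact infEDist_le_hausdorffEDist_of_mem (mem_univ y)
        _ < ENNReal.ofReal M := by
            rw [← ENNReal.ofReal_toReal h]
            exact (ENNReal.ofReal_lt_ofReal_iff (by positivity)).2 (lt_add_one _)
    obtain ⟨a, ha, hya⟩ := infEDist_lt_iff.1 hlt
    exact ⟨a, ha, by rwa [edist_lt_ofReal, Real.dist_eq] at hya⟩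
  obtain ⟨a, ha, hpa⟩ := hnear (p - M)
  obtain ⟨b, hb, hpb⟩ := hnear (p + M)
  exact ⟨a, ha, b, hb, by linarith [(abs_lt.1 hpa).1], by linarith [(abs_lt.1 hpb).2]⟩

lemma two_mul_hausdorffEDist_univ_le_ultraDiam {A : Set ℝ} (h : hausdorffEDist A univ ≠ ⊤) :
    2 * hausdorffEDist A univ ≤ ultraDiam A := by
  have hsup : hausdorffEDist A univ ≤ ⨆ p : ℝ, infEDist p A :=
    hausdorffEDist_le_of_infEDist
      (fun x _ => by rw [infEDist_zero_of_mem (mem_univ x)]; exact zero_le)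
      (fun p _ => le_iSup (fun q => infEDist q A) p)
  refine (mul_le_mul_right hsup 2).trans ?_
  rw [ENNReal.mul_iSup]
  refine iSup_le fun p => ?_
  obtain ⟨a, ha, b, hb, hap, hpb⟩ := exists_mem_lt_and_mem_gt_of_hausdorffEDist_univ_ne_top h p
  exact two_mul_infEDist_le_ultraDiam ha hb hap hpb

theorem canonical_geodesic_real_GH_general (X : Set ℝ)
    (hfin : EMetric.hausdorffEdist X (Set.univ : Set ℝ) ≠ ⊤)
    (d : ℝ) (hd : d = (EMetric.hausdorffEdist X (Set.univ : Set ℝ)).toReal)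
    (t s : ℝ) (h0 : 0 ≤ t) (hts : t ≤ s) (hsd : s ≤ d) :
    ghDist (Metric.cthickening t X) (Metric.cthickening s X) = ENNReal.ofReal (s - t) := by
  have hD : hausdorffEDist X univ = ENNReal.ofReal d := by
    rw [hd, ENNReal.ofReal_toReal hfin]; rfl
  have hCt := hausdorffEDist_cthickening_univ hD h0
  have hCs := hausdorffEDist_cthickening_univ hD (h0.trans hts)
  have hupper : ghDist (cthickening t X) (cthickening s X) ≤ ENNReal.ofReal (s - t) := by
    refine ghDist_le_of_subset_cthickening isClosed_cthickening isClosed_cthickening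
      (sub_nonneg.2 hts) ((cthickening_mono hts X).trans (self_subset_cthickening _)) ?_
    rw [cthickening_cthickening (sub_nonneg.2 hts) h0, sub_add_cancel]
  have hlower : 2 * ENNReal.ofReal (s - t) ≤ 2 * ghDist (cthickening t X) (cthickening s X) :=
    calc 2 * ENNReal.ofReal (s - t)
        = 2 * hausdorffEDist (cthickening t X) univ -
            2 * hausdorffEDist (cthickening s X) univ := by
          rw [hCt, hCs, ← ENNReal.mul_sub fun _ _ => ENNReal.ofNat_ne_top,
            ← ENNReal.ofReal_sub _ (by linarith), sub_sub_sub_cancel_left]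
      _ ≤ ultraDiam (cthickening t X) - ultraDiam (cthickening s X) := by
          gcongr
          · exact two_mul_hausdorffEDist_univ_le_ultraDiam (hCt ▸ ENNReal.ofReal_ne_top)
          · exact ultraDiam_le_two_mul_hausdorffEDist_univ isClosed_cthickening
              (hCs ▸ ENNReal.ofReal_ne_top)
      _ ≤ 2 * ghDist (cthickening t X) (cthickening s X) :=
          tsub_le_iff_left.2 ultraDiam_le_add_two_mul_ghDist
  exact hupper.antisymm ((ENNReal.mul_le_mul_iff_right two_ne_zero ENNReal.ofNat_ne_top).1 hlower)

/-- for a nonempty closed `X ⊆ ℝ` with `d = d_H(X, ℝ) < ∞`, the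
canonical Hausdorff geodesic `C_t = B_t(X)` satisfies
`d_GH(C_t, C_s) = s − t` for all `0 ≤ t ≤ s ≤ d` (induced metrics), i.e. it is
a shortest curve for the Gromov–Hausdorff distance. -/
theorem canonical_geodesic_real_GH (X : Set ℝ) (hX : X.Nonempty) (hXc : IsClosed X)
    (hfin : EMetric.hausdorffEdist X (Set.univ : Set ℝ) ≠ ⊤)
    (d : ℝ) (hd : d = (EMetric.hausdorffEdist X (Set.univ : Set ℝ)).toReal)
    (t s : ℝ) (h0 : 0 ≤ t) (hts : t ≤ s) (hsd : s ≤ d) :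
    ghDist (Metric.cthickening t X) (Metric.cthickening s X) = ENNReal.ofReal (s - t) :=
  canonical_geodesic_real_GH_general X hfin d hd t s h0 hts hsd

end
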